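/- arXiv:2207.13910 — 2 statements merged into one kernel-verified Lean document; each statement's English description precedes it below -/
import Mathlib

section
/- Suppose (g₀; n₁, …, n_k) is the signature of a cyclic action of order n on a closed orientable surface of genus g ≥ 2, satisfying the Riemann–Hurwitz equation (2g−2)/n = 2g₀ − 2 + Σᵢ(1 − 1/nᵢ) with each nᵢ ≥ 2 dividing n. If g₀ ≥ 2 then n ≤ g − 1. -/
/-!
Every term `1 - 1/nᵢ` of the branching sum is nonnegative, so with `g₀ ≥ 2` the
Riemann–Hurwitz equation gives `(2g - 2)/n ≥ 2`, i.e. `2n ≤ 2g - 2`.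
-/

/-- At `m = 0` this holds through the junk value `1 / 0 = 0`. -/
lemma one_sub_one_div_natCast_nonneg {α : Type*} [Field α] [LinearOrder α]
    [IsStrictOrderedRing α] (m : ℕ) : (0 : α) ≤ 1 - 1 / (m : α) := by
  rw [one_div, sub_nonneg]
  exact Nat.cast_inv_le_one m

lemma sum_one_sub_one_div_natCast_nonneg {ι α : Type*} [Field α] [LinearOrder α]
    [IsStrictOrderedRing α] (s : Finset ι) (m : ι → ℕ) :
    (0 : α) ≤ ∑ i ∈ s, (1 - 1 / (m i : α)) :=
  Finset.sum_nonneg fun i _ => one_sub_one_div_natCast_nonneg (m i)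

theorem stmt12_general (n g g₀ k : ℕ) (ni : Fin k → ℕ)
    (hn : 2 ≤ n)
    (hRH : (2 * (g : ℚ) - 2) / n =
      2 * (g₀ : ℚ) - 2 + ∑ i, (1 - 1 / (ni i : ℚ)))
    (hg₀ : 2 ≤ g₀) :
    (n : ℤ) ≤ (g : ℤ) - 1 := by
  have hn_pos : (0 : ℚ) < n := by exact_mod_cast (by omega : 0 < n)
  have hg₀' : (2 : ℚ) ≤ g₀ := by exact_mod_cast hg₀
  have two_le : (2 : ℚ) ≤ (2 * (g : ℚ) - 2) / n := by
    rw [hRH]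
    linarith [sum_one_sub_one_div_natCast_nonneg (α := ℚ) Finset.univ ni]
  have : 2 * (n : ℚ) ≤ 2 * g - 2 := (le_div_iff₀ hn_pos).mp two_le
  have : (n : ℚ) ≤ g - 1 := by linarith
  exact_mod_cast this

/-- Riemann–Hurwitz: if `(2g−2)/n = 2g₀ − 2 + Σᵢ (1 − 1/nᵢ)` with `g ≥ 2`, `n ≥ 2`,
each `nᵢ ≥ 2` dividing `n`, and `g₀ ≥ 2`, then `n ≤ g − 1`. -/
theorem stmt12 (n g g₀ k : ℕ) (ni : Fin k → ℕ)
    (hn : 2 ≤ n) (hg : 2 ≤ g)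
    (hni : ∀ i, 2 ≤ ni i) (hdvd : ∀ i, ni i ∣ n)
    (hRH : (2 * (g : ℚ) - 2) / n =
      2 * (g₀ : ℚ) - 2 + ∑ i, (1 - 1 / (ni i : ℚ)))
    (hg₀ : 2 ≤ g₀) :
    (n : ℤ) ≤ (g : ℤ) - 1 :=
  stmt12_general n g g₀ k ni hn hRH hg₀
end

section
/- Suppose a cyclic group of order n acts on a genus-g surface (g ≥ 2) with quotient a sphere with exactly 3 cone points of orders n₁ ≤ n₂ ≤ n₃, each dividing n, with lcm of any two of them equal to n, and (2g−2)/n = 1 − 1/n₁ − 1/n₂ − 1/n₃. Then n ≥ 2g + 1. -/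
/-! Multiplying the Riemann–Hurwitz equation by `n` gives `n + 2 = 2g + n/n₁ + n/n₂ + n/n₃`,
and each `n/nᵢ` is a positive integer because `nᵢ ∣ n`. -/

theorem riemannHurwitz_three_cone_points {n g n₁ n₂ n₃ : ℕ} (hn : n ≠ 0)
    (hd1 : n₁ ∣ n) (hd2 : n₂ ∣ n) (hd3 : n₃ ∣ n)
    (hRH : (2 * (g : ℚ) - 2) / n = 1 - 1 / n₁ - 1 / n₂ - 1 / n₃) :
    2 * g + n / n₁ + n / n₂ + n / n₃ = n + 2 := by
  have hn₁ : n₁ ≠ 0 := ne_zero_of_dvd_ne_zero hn hd1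
  have hn₂ : n₂ ≠ 0 := ne_zero_of_dvd_ne_zero hn hd2
  have hn₃ : n₃ ≠ 0 := ne_zero_of_dvd_ne_zero hn hd3
  have hq : 2 * (g : ℚ) + n / n₁ + n / n₂ + n / n₃ = n + 2 := by
    field_simp at hRH ⊢
    linear_combination hRH
  apply Nat.cast_injective (R := ℚ)
  push_cast [Nat.cast_div hd1 (Nat.cast_ne_zero.2 hn₁), Nat.cast_div hd2 (Nat.cast_ne_zero.2 hn₂),
    Nat.cast_div hd3 (Nat.cast_ne_zero.2 hn₃)]
  exact hq

theorem stmt17_general (n g n₁ n₂ n₃ : ℕ)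
    (hn : 2 ≤ n)
    (hd1 : n₁ ∣ n) (hd2 : n₂ ∣ n) (hd3 : n₃ ∣ n)
    (hRH : (2 * (g : ℚ) - 2) / n = 1 - 1 / n₁ - 1 / n₂ - 1 / n₃) :
    2 * g + 1 ≤ n := by
  have hn₀ : 0 < n := by omega
  have hsum := riemannHurwitz_three_cone_points hn₀.ne' hd1 hd2 hd3 hRH
  have ha₁ := Nat.div_pos (Nat.le_of_dvd hn₀ hd1) (Nat.pos_of_dvd_of_pos hd1 hn₀)
  have ha₂ := Nat.div_pos (Nat.le_of_dvd hn₀ hd2) (Nat.pos_of_dvd_of_pos hd2 hn₀)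
  have ha₃ := Nat.div_pos (Nat.le_of_dvd hn₀ hd3) (Nat.pos_of_dvd_of_pos hd3 hn₀)
  omega

/-- If a cyclic group of order `n` acts on a genus-`g` surface (`g ≥ 2`) with quotient a
sphere with three cone points of orders `n₁ ≤ n₂ ≤ n₃`, each dividing `n`, with the lcm of
any two of them equal to `n`, and the Riemann–Hurwitz equation
`(2g−2)/n = 1 − 1/n₁ − 1/n₂ − 1/n₃` holds, then `n ≥ 2g + 1`. -/
theorem stmt17 (n g n₁ n₂ n₃ : ℕ)
    (hn : 2 ≤ n) (hg : 2 ≤ g)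
    (h1 : 2 ≤ n₁) (h2 : 2 ≤ n₂) (h3 : 2 ≤ n₃)
    (h12 : n₁ ≤ n₂) (h23 : n₂ ≤ n₃)
    (hd1 : n₁ ∣ n) (hd2 : n₂ ∣ n) (hd3 : n₃ ∣ n)
    (hl12 : Nat.lcm n₁ n₂ = n) (hl13 : Nat.lcm n₁ n₃ = n) (hl23 : Nat.lcm n₂ n₃ = n)
    (hRH : (2 * (g : ℚ) - 2) / n = 1 - 1 / n₁ - 1 / n₂ - 1 / n₃) :
    2 * g + 1 ≤ n :=
  stmt17_general n g n₁ n₂ n₃ hn hd1 hd2 hd3 hRH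
end
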